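/- arXiv:2112.12354 — 3 statements merged into one kernel-verified Lean document; each statement's English description precedes it below -/
import Mathlib

section
/- For the conjugate gradient algorithm applied to Wx = b with x_0 = 0, the squared residual norm at step n satisfies ‖r_n‖²₂ = (∏_{j=0}^{n−1} b_j(ν)²) / π_n(0;ν)², where r_n = b − Wx_n, ν is the vector empirical spectral distribution of (W,b), b_j(ν) are the off-diagonal Jacobi coefficients of ν, and π_n(0;ν) is the degree-n monic orthogonal polynomial evaluated at 0. -/
open MeasureTheory Polynomial Matrix

/-!
Write `x_n = P(W) b` with `deg P < n`; then `r_n = R(W) b` for `R = 1 - X P`, so `deg R ≤ n` and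
`R(0) = 1`. In the eigenbasis of `W`, `⟨f(W) b, g(W) b⟩ = ∫ f g dν`, and the minimality of `x_n`
(the Galerkin condition `r_n ⊥ K_n(W, b)`) says that `R` is `ν`-orthogonal to every polynomial of
degree `< n`. As `ν` has more than `n` atoms, this forces `R = β p_n`, hence
`‖r_n‖² = ∫ R² dν = β² = 1 / p_n(0)²`. Comparing leading coefficients in the three-term
recurrence gives `lc(p_n) ∏_{j<n} b_j = lc(p_0) = ±1`, and `p_n(0) = lc(p_n) π_n(0)`.
-/

lemma Real.eq_zero_of_forall_two_mul_mul_le {g m : ℝ} (h : ∀ ε : ℝ, 2 * ε * g ≤ ε ^ 2 * m) :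
    g = 0 := by
  have hε := h (g / (|m| + 1))
  field_simp at hε
  have hg : g ^ 2 = 0 := by nlinarith [le_abs_self m, abs_nonneg m, sq_nonneg g]
  exact pow_eq_zero_iff two_ne_zero |>.mp hg

section Galerkin

variable {ι : Type*} [Fintype ι]

theorem Matrix.IsSymm.dotProduct_mulVec_comm {R : Type*} [CommSemiring R] {W : Matrix ι ι R}
    (hW : W.IsSymm) (u v : ι → R) : u ⬝ᵥ W *ᵥ v = v ⬝ᵥ W *ᵥ u := by
  rw [dotProduct_mulVec, ← mulVec_transpose, hW, dotProduct_comm]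

theorem Matrix.IsSymm.dotProduct_sub_mulVec_eq_zero_of_forall_le {W : Matrix ι ι ℝ}
    (hW : W.IsSymm) {K : Submodule ℝ (ι → ℝ)} {b x xn : ι → ℝ} (hx : W *ᵥ x = b) (hxn : xn ∈ K)
    (hmin : ∀ y ∈ K, (x - xn) ⬝ᵥ W *ᵥ (x - xn) ≤ (x - y) ⬝ᵥ W *ᵥ (x - y))
    {v : ι → ℝ} (hv : v ∈ K) : (b - W *ᵥ xn) ⬝ᵥ v = 0 := by
  rw [← hx, ← mulVec_sub, dotProduct_comm, hW.dotProduct_mulVec_comm]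
  refine Real.eq_zero_of_forall_two_mul_mul_le (m := v ⬝ᵥ W *ᵥ v) fun ε => ?_
  have hle := hmin (xn + ε • v) (K.add_mem hxn (K.smul_mem ε hv))
  rw [← sub_sub] at hle
  generalize x - xn = e at hle ⊢
  rw [mulVec_sub, mulVec_smul, dotProduct_sub, sub_dotProduct, sub_dotProduct, dotProduct_smul,
    smul_dotProduct, smul_dotProduct, dotProduct_smul, hW.dotProduct_mulVec_comm v e] at hle
  simp only [smul_eq_mul] at hle
  nlinarith

end Galerkin

section Krylov

variable {ι R : Type*} [Fintype ι] [DecidableEq ι] [CommRing R]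

def krylovSubspace (W : Matrix ι ι R) (b : ι → R) (n : ℕ) : Submodule R (ι → R) :=
  Submodule.span R {v | ∃ k < n, v = (W ^ k) *ᵥ b}

theorem krylovSubspace_eq_map_degreeLT (W : Matrix ι ι R) (b : ι → R) (n : ℕ) :
    krylovSubspace W b n = (degreeLT R n).map
      (LinearMap.applyₗ b ∘ₗ Matrix.toLin'.toLinearMap ∘ₗ (aeval W).toLinearMap) := by
  classical
  rw [degreeLT_eq_span_X_pow, Submodule.map_span, krylovSubspace]
  congr 1
  ext v
  simp [eq_comm]

theorem mem_krylovSubspace_iff {W : Matrix ι ι R} {b v : ι → R} {n : ℕ} :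
    v ∈ krylovSubspace W b n ↔ ∃ f ∈ degreeLT R n, aeval W f *ᵥ b = v := by
  simp [krylovSubspace_eq_map_degreeLT]

theorem exists_sub_mulVec_eq_aeval_mulVec [Nontrivial R] {W : Matrix ι ι R} {b xn : ι → R}
    {n : ℕ} (hxn : xn ∈ krylovSubspace W b n) :
    ∃ Rₙ : R[X], Rₙ.degree ≤ n ∧ Rₙ.eval 0 = 1 ∧ b - W *ᵥ xn = aeval W Rₙ *ᵥ b := by
  obtain ⟨P, hP, rfl⟩ := mem_krylovSubspace_iff.mp hxn
  refine ⟨1 - X * P, ?_, by simp, by simp [sub_mulVec, mulVec_mulVec]⟩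
  refine (degree_sub_le _ _).trans (max_le ?_ ?_)
  · exact degree_one_le.trans (WithBot.coe_le_coe.mpr n.zero_le)
  · rw [mul_comm, degree_mul_X]
    exact Nat.WithBot.add_one_le_of_lt (mem_degreeLT.mp hP)

end Krylov

section Spectral

variable {ι R : Type*} [Fintype ι] [CommRing R]

theorem Matrix.IsSymm.dotProduct_mulVec_of_mulVec_eq_smul {W : Matrix ι ι R} (hW : W.IsSymm)
    {q : ι → R} {μ : R} (hq : W *ᵥ q = μ • q) (u : ι → R) :
    q ⬝ᵥ W *ᵥ u = μ * (q ⬝ᵥ u) := by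
  rw [dotProduct_mulVec, ← mulVec_transpose, hW, hq, smul_dotProduct, smul_eq_mul]

variable [DecidableEq ι]

theorem dotProduct_aeval_mulVec {W : Matrix ι ι R} {q : ι → R} {μ : R}
    (hq : ∀ u, q ⬝ᵥ W *ᵥ u = μ * (q ⬝ᵥ u)) (f : R[X]) (u : ι → R) :
    q ⬝ᵥ aeval W f *ᵥ u = f.eval μ * (q ⬝ᵥ u) := by
  induction f using Polynomial.induction_on generalizing u with
  | C a => simp [Algebra.algebraMap_eq_smul_one, smul_mulVec]
  | add f g hf hg => simp [add_mulVec, hf, hg, add_mul]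
  | monomial k a ih =>
    rw [pow_succ, ← mul_assoc, map_mul, aeval_X, ← mulVec_mulVec, ih, hq]
    simp only [eval_mul, eval_X]
    ring

theorem sum_dotProduct_mul_dotProduct {q : ι → ι → R}
    (hq : ∀ i j, q i ⬝ᵥ q j = if i = j then 1 else 0) (u v : ι → R) :
    ∑ j, (q j ⬝ᵥ u) * (q j ⬝ᵥ v) = u ⬝ᵥ v := by
  have hQ : Matrix.of q * (Matrix.of q)ᵀ = 1 := by
    ext i j
    exact hq i j
  calc ∑ j, (q j ⬝ᵥ u) * (q j ⬝ᵥ v) = (Matrix.of q *ᵥ u) ⬝ᵥ (Matrix.of q *ᵥ v) := rfl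
    _ = u ⬝ᵥ v := by
      rw [dotProduct_mulVec, ← mulVec_transpose, mulVec_mulVec, mul_eq_one_comm.mp hQ,
        one_mulVec]

end Spectral

theorem MeasureTheory.eq_zero_of_integral_eq_zero_of_measure_singleton_ne_zero {α : Type*}
    [MeasurableSpace α] {μ : Measure α} {f : α → ℝ} (hf : 0 ≤ f) (hfi : Integrable f μ)
    (h : ∫ x, f x ∂μ = 0) {x : α} (hx : μ {x} ≠ 0) : f x = 0 := by
  by_contra hfx
  have hae : ∀ᵐ y ∂μ, f y = 0 := (integral_eq_zero_iff_of_nonneg hf hfi).mp h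
  exact hx (measure_mono_null (Set.singleton_subset_iff.mpr hfx) (ae_iff.mp hae))

section DiracSum

variable {ι α : Type*} [Fintype ι] [MeasurableSpace α]

theorem isProbabilityMeasure_sum_smul_dirac {w : ι → ℝ} (hw : ∀ j, 0 ≤ w j) (hw1 : ∑ j, w j = 1)
    (x : ι → α) : IsProbabilityMeasure (∑ j, ENNReal.ofReal (w j) • Measure.dirac (x j)) := by
  constructor
  simp only [Measure.finsetSum_apply, Measure.smul_apply, measure_univ, smul_eq_mul, mul_one]
  rw [← ENNReal.ofReal_sum_of_nonneg fun j _ => hw j, hw1, ENNReal.ofReal_one]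

variable [MeasurableSingletonClass α]

theorem integrable_smul_dirac (c : ℝ) (x : α) (f : α → ℝ) :
    Integrable f (ENNReal.ofReal c • Measure.dirac x) :=
  (integrable_dirac enorm_lt_top).smul_measure ENNReal.ofReal_ne_top

theorem integrable_sum_smul_dirac (w : ι → ℝ) (x : ι → α) (f : α → ℝ) :
    Integrable f (∑ j, ENNReal.ofReal (w j) • Measure.dirac (x j)) :=
  integrable_finsetSum_measure.mpr fun j _ => integrable_smul_dirac (w j) (x j) f

theorem integral_sum_smul_dirac {w : ι → ℝ} (hw : ∀ j, 0 ≤ w j) (x : ι → α) (f : α → ℝ) :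
    ∫ t, f t ∂(∑ j, ENNReal.ofReal (w j) • Measure.dirac (x j)) = ∑ j, w j * f (x j) := by
  rw [integral_finsetSum_measure fun j _ => integrable_smul_dirac (w j) (x j) f]
  simp [integral_smul_measure, integral_dirac, ENNReal.toReal_ofReal (hw _)]

end DiracSum

section SpectralMeasure

variable {ι : Type*} [Fintype ι] [DecidableEq ι]

noncomputable def vectorSpectralMeasure (q : ι → ι → ℝ) (lam : ι → ℝ) (b : ι → ℝ) : Measure ℝ :=
  ∑ j, ENNReal.ofReal ((q j ⬝ᵥ b) ^ 2) • Measure.dirac (lam j)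

theorem dotProduct_aeval_mulVec_eq_integral {W : Matrix ι ι ℝ} (hW : W.IsSymm) {lam : ι → ℝ}
    {q : ι → ι → ℝ} (heig : ∀ j, W *ᵥ q j = lam j • q j)
    (horth : ∀ i j, q i ⬝ᵥ q j = if i = j then 1 else 0) (b : ι → ℝ) (f g : ℝ[X]) :
    (aeval W f *ᵥ b) ⬝ᵥ (aeval W g *ᵥ b) =
      ∫ t, f.eval t * g.eval t ∂(vectorSpectralMeasure q lam b) := by
  rw [vectorSpectralMeasure, integral_sum_smul_dirac (fun _ => sq_nonneg _),
    ← sum_dotProduct_mul_dotProduct horth]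
  refine Finset.sum_congr rfl fun j _ => ?_
  simp only [dotProduct_aeval_mulVec (hW.dotProduct_mulVec_of_mulVec_eq_smul (heig j))]
  ring

theorem isProbabilityMeasure_vectorSpectralMeasure {q : ι → ι → ℝ}
    (horth : ∀ i j, q i ⬝ᵥ q j = if i = j then 1 else 0) (lam : ι → ℝ) {b : ι → ℝ}
    (hb : b ⬝ᵥ b = 1) : IsProbabilityMeasure (vectorSpectralMeasure q lam b) := by
  refine isProbabilityMeasure_sum_smul_dirac (fun _ => sq_nonneg _) ?_ lam
  simpa only [sq, sum_dotProduct_mul_dotProduct horth] using hb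

end SpectralMeasure

theorem Polynomial.leadingCoeff_mul_prod_eq_of_recurrence {R : Type*} [CommRing R]
    {p : ℕ → R[X]} {a b : ℕ → R} {n : ℕ} (hdeg : ∀ k ≤ n, (p k).natDegree = k)
    (hrec : ∀ k < n, X * p k = C (a k) * p k + C (b k) * p (k + 1) +
      (if k = 0 then 0 else C (b (k - 1)) * p (k - 1))) :
    ∀ m ≤ n, (p m).leadingCoeff * ∏ j ∈ Finset.range m, b j = (p 0).leadingCoeff := by
  have hstep : ∀ k < n, (p k).leadingCoeff = b k * (p (k + 1)).leadingCoeff := by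
    intro k hk
    have h := congrArg (coeff · (k + 1)) (hrec k hk)
    have hlow : ∀ m ≤ k, (p m).coeff (k + 1) = 0 := fun m hm =>
      coeff_eq_zero_of_natDegree_lt (by rw [hdeg m (by omega)]; omega)
    simp only [coeff_X_mul, coeff_add, coeff_C_mul, hlow k le_rfl] at h
    rw [leadingCoeff, leadingCoeff, hdeg k hk.le, hdeg (k + 1) hk, h]
    split_ifs with hk0
    · simp
    · simp [hlow (k - 1) (by omega)]
  intro m hm
  induction m with
  | zero => simp
  | succ m ih =>
    rw [Finset.prod_range_succ, ← ih (by omega), hstep m (by omega)]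
    ring

theorem sq_leadingCoeff_eq_one_of_natDegree_eq_zero {ν : Measure ℝ} [IsProbabilityMeasure ν]
    {p : ℝ[X]} (hp : p.natDegree = 0) (hnorm : ∫ t, p.eval t ^ 2 ∂ν = 1) :
    p.leadingCoeff ^ 2 = 1 := by
  rw [eq_C_of_natDegree_eq_zero hp] at hnorm
  simpa [leadingCoeff, hp] using hnorm

section OrthogonalPolynomials

variable {ν : Measure ℝ} (hint : ∀ f : ℝ[X], Integrable (fun t => f.eval t) ν)
include hint

theorem integral_eval_mul_eq_zero_of_mem_degreeLT {p : ℕ → ℝ[X]} {n : ℕ}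
    (hp : ∀ k < n, (p k).degree = k) {g : ℝ[X]}
    (horth : ∀ k < n, ∫ t, (p k).eval t * g.eval t ∂ν = 0) {f : ℝ[X]}
    (hf : f ∈ degreeLT ℝ n) : ∫ t, f.eval t * g.eval t ∂ν = 0 := by
  -- `p` is only prescribed below `n`; padding it with `X ^ k` makes it a `Polynomial.Sequence`.
  let S : Sequence ℝ := ⟨fun k => if k < n then p k else X ^ k, fun k => by
    split_ifs with hk
    exacts [hp k hk, degree_X_pow k]⟩
  have hspan : Submodule.span ℝ (p '' Set.Iio n) = degreeLT ℝ n := by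
    rw [← S.span_degreeLT fun k _ => (leadingCoeff_ne_zero.mpr (S.ne_zero k)).isUnit]
    congr 1
    exact Set.image_congr fun k hk => (if_pos hk).symm
  let L : ℝ[X] →ₗ[ℝ] ℝ :=
    { toFun := fun f => ∫ t, (f * g).eval t ∂ν
      map_add' := fun f₁ f₂ => by simp only [add_mul, eval_add, integral_add (hint _) (hint _)]
      map_smul' := fun c f => by simp [integral_const_mul] }
  have hker : Submodule.span ℝ (p '' Set.Iio n) ≤ LinearMap.ker L := by
    refine Submodule.span_le.mpr ?_
    rintro _ ⟨k, hk, rfl⟩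
    simpa [L] using horth k hk
  simpa [L] using hker (hspan ▸ hf)

theorem eq_zero_of_mem_degreeLT_of_forall_integral_eq_zero {n : ℕ}
    (hatoms : ∃ s : Finset ℝ, n ≤ s.card ∧ ∀ x ∈ s, ν {x} ≠ 0) {S : ℝ[X]}
    (hS : S ∈ degreeLT ℝ n) (horth : ∀ g ∈ degreeLT ℝ n, ∫ t, g.eval t * S.eval t ∂ν = 0) :
    S = 0 := by
  obtain ⟨s, hcard, hs⟩ := hatoms
  have hroots : ∀ x ∈ s, S.eval x = 0 := fun x hx => by
    simpa using eq_zero_of_integral_eq_zero_of_measure_singleton_ne_zero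
      (f := fun t => (S * S).eval t) (fun t => by simpa using mul_self_nonneg (S.eval t))
      (hint _) (by simpa using horth S hS) (hs x hx)
  by_contra hS0
  exact hS0 <| eq_zero_of_natDegree_lt_card_of_eval_eq_zero' S s hroots <|
    (natDegree_lt_iff_degree_lt hS0).mpr (mem_degreeLT.mp hS) |>.trans_le hcard

theorem eq_C_mul_of_forall_integral_eq_zero {n : ℕ}
    (hatoms : ∃ s : Finset ℝ, n ≤ s.card ∧ ∀ x ∈ s, ν {x} ≠ 0) {R Q : ℝ[X]}
    (hR : R.degree ≤ n) (hQ : Q.degree = n)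
    (hRorth : ∀ g ∈ degreeLT ℝ n, ∫ t, g.eval t * R.eval t ∂ν = 0)
    (hQorth : ∀ g ∈ degreeLT ℝ n, ∫ t, g.eval t * Q.eval t ∂ν = 0) :
    R = C (R.coeff n / Q.leadingCoeff) * Q := by
  have hQ0 : Q ≠ 0 := by rintro rfl; simp at hQ
  have hint₂ : ∀ f g : ℝ[X], Integrable (fun t => f.eval t * g.eval t) ν := fun f g => by
    simpa using hint (f * g)
  rw [← sub_eq_zero]
  refine eq_zero_of_mem_degreeLT_of_forall_integral_eq_zero hint hatoms ?_ fun g hg => ?_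
  · rw [mem_degreeLT, degree_lt_iff_coeff_zero]
    intro m hm
    rcases hm.eq_or_lt with rfl | hm
    · rw [coeff_sub, coeff_C_mul, ← natDegree_eq_of_degree_eq_some hQ, coeff_natDegree,
        div_mul_cancel₀ _ (leadingCoeff_ne_zero.mpr hQ0), sub_self]
    · have hlt : ∀ P : ℝ[X], P.degree ≤ n → P.coeff m = 0 := fun P hP =>
        coeff_eq_zero_of_degree_lt (hP.trans_lt (by exact_mod_cast hm))
      rw [coeff_sub, coeff_C_mul, hlt R hR, hlt Q hQ.le, mul_zero, sub_zero]
  · simp only [eval_sub, eval_mul, eval_C, mul_sub, mul_left_comm (g.eval _)]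
    rw [integral_sub (hint₂ g R) ((hint₂ g Q).const_mul _), integral_const_mul, hRorth g hg,
      hQorth g hg, mul_zero, sub_zero]

end OrthogonalPolynomials

theorem stmt8_general
    (N : ℕ) (W : Matrix (Fin N) (Fin N) ℝ)
    (hWsym : W.IsSymm)
    (bvec : Fin N → ℝ) (hb : bvec ⬝ᵥ bvec = 1)
    (lam : Fin N → ℝ) (q : Fin N → Fin N → ℝ)
    (heig : ∀ j, W.mulVec (q j) = lam j • q j)
    (horthq : ∀ i j, q i ⬝ᵥ q j = if i = j then (1 : ℝ) else 0)
    (ν : Measure ℝ)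
    (hν : ν = ∑ j : Fin N, (ENNReal.ofReal ((q j ⬝ᵥ bvec) ^ 2)) • Measure.dirac (lam j))
    (n : ℕ)
    (hatoms : ∃ t : Finset ℝ, n + 1 ≤ t.card ∧ ∀ x ∈ t, ν {x} ≠ 0)
    -- orthonormal polynomials `p` of `ν` with recurrence coefficients `a`, `b'`
    (p : ℕ → Polynomial ℝ) (a b' : ℕ → ℝ)
    (hdeg : ∀ k ≤ n, (p k).natDegree = k)
    (horthp : ∀ k ≤ n, ∀ m ≤ n, k ≠ m → ∫ t, (p k).eval t * (p m).eval t ∂ν = 0)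
    (hnorm : ∀ k ≤ n, ∫ t, (p k).eval t ^ 2 ∂ν = 1)
    (hrec : ∀ k < n, Polynomial.X * p k =
      Polynomial.C (a k) * p k + Polynomial.C (b' k) * p (k + 1) +
        (if k = 0 then 0 else Polynomial.C (b' (k - 1)) * p (k - 1)))
    -- monic orthogonal polynomials of `ν`
    (mop : ℕ → Polynomial ℝ)
    (hrel : ∀ k ≤ n, p k = Polynomial.C ((p k).leadingCoeff) * mop k)
    (x xn : Fin N → ℝ)
    (hx : W.mulVec x = bvec)
    (hxnmem : xn ∈ Submodule.span ℝ {v : Fin N → ℝ | ∃ k < n, v = (W ^ k).mulVec bvec})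
    (hxnmin : ∀ y ∈ Submodule.span ℝ {v : Fin N → ℝ | ∃ k < n, v = (W ^ k).mulVec bvec},
      (x - xn) ⬝ᵥ W.mulVec (x - xn) ≤ (x - y) ⬝ᵥ W.mulVec (x - y)) :
    (bvec - W.mulVec xn) ⬝ᵥ (bvec - W.mulVec xn) =
      (∏ j ∈ Finset.range n, (b' j) ^ 2) / ((mop n).eval 0) ^ 2 := by
  have hν' : ν = vectorSpectralMeasure q lam bvec := hν
  have : IsProbabilityMeasure ν := hν' ▸ isProbabilityMeasure_vectorSpectralMeasure horthq lam hb
  have hint : ∀ f : ℝ[X], Integrable (fun t => f.eval t) ν := fun f =>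
    hν' ▸ integrable_sum_smul_dirac _ lam _
  have hgram : ∀ f g : ℝ[X], (aeval W f *ᵥ bvec) ⬝ᵥ (aeval W g *ᵥ bvec) =
      ∫ t, f.eval t * g.eval t ∂ν :=
    hν' ▸ dotProduct_aeval_mulVec_eq_integral hWsym heig horthq bvec
  have hpdeg : ∀ k ≤ n, (p k).degree = k := fun k hk => by
    have hpk : p k ≠ 0 := fun h => by simpa [h] using hnorm k hk
    rw [degree_eq_natDegree hpk, hdeg k hk]
  obtain ⟨R, hRdeg, hR0, hres⟩ := exists_sub_mulVec_eq_aeval_mulVec hxnmem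
  have hRorth : ∀ g ∈ degreeLT ℝ n, ∫ t, g.eval t * R.eval t ∂ν = 0 := fun g hg => by
    rw [← hgram, dotProduct_comm, ← hres]
    exact hWsym.dotProduct_sub_mulVec_eq_zero_of_forall_le hx hxnmem hxnmin
      (mem_krylovSubspace_iff.mpr ⟨g, hg, rfl⟩)
  have hpnorth : ∀ g ∈ degreeLT ℝ n, ∫ t, g.eval t * (p n).eval t ∂ν = 0 :=
    fun g => integral_eval_mul_eq_zero_of_mem_degreeLT hint (fun k hk => hpdeg k hk.le)
      (fun k hk => horthp k hk.le n le_rfl hk.ne)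
  obtain ⟨β, hRβ⟩ : ∃ β, R = C β * p n := ⟨_, eq_C_mul_of_forall_integral_eq_zero hint
    (hatoms.imp fun _ h => ⟨by omega, h.2⟩) hRdeg (hpdeg n le_rfl) hRorth hpnorth⟩
  have hlc : (p n).leadingCoeff ^ 2 * ∏ j ∈ Finset.range n, b' j ^ 2 = 1 := by
    rw [Finset.prod_pow, ← mul_pow, leadingCoeff_mul_prod_eq_of_recurrence hdeg hrec n le_rfl,
      sq_leadingCoeff_eq_one_of_natDegree_eq_zero (hdeg 0 n.zero_le) (hnorm 0 n.zero_le)]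
  rw [hRβ, hrel n le_rfl, eval_mul, eval_C, eval_mul, eval_C, ← mul_assoc] at hR0
  have hmop0 : (mop n).eval 0 ≠ 0 := fun h => by simp [h] at hR0
  rw [hres, hgram, hRβ, eq_div_iff (pow_ne_zero 2 hmop0)]
  simp only [eval_mul, eval_C, ← sq, mul_pow, integral_const_mul, hnorm n le_rfl, mul_one]
  linear_combination (-(β ^ 2 * (mop n).eval 0 ^ 2)) * hlc +
    (∏ j ∈ Finset.range n, b' j ^ 2) * (β * (p n).leadingCoeff * (mop n).eval 0 + 1) * hR0

/-- for the conjugate gradient algorithm applied to `W x = b` with `x₀ = 0`, the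
squared residual norm at step `n` satisfies
`‖r_n‖₂² = (∏_{j<n} b_j(ν)²) / π_n(0;ν)²`, where `r_n = b − W x_n`, `ν` is the vector empirical
spectral distribution of `(W,b)`, `b_j(ν)` are the off-diagonal Jacobi coefficients of `ν` and
`π_n(·;ν)` is the degree-`n` monic orthogonal polynomial of `ν`. -/
theorem stmt8
    (N : ℕ) (W : Matrix (Fin N) (Fin N) ℝ)
    (hWsym : W.IsSymm) (hWpd : W.PosDef)
    (bvec : Fin N → ℝ) (hb : bvec ⬝ᵥ bvec = 1)
    (lam : Fin N → ℝ) (q : Fin N → Fin N → ℝ)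
    (heig : ∀ j, W.mulVec (q j) = lam j • q j)
    (horthq : ∀ i j, q i ⬝ᵥ q j = if i = j then (1 : ℝ) else 0)
    (ν : Measure ℝ)
    (hν : ν = ∑ j : Fin N, (ENNReal.ofReal ((q j ⬝ᵥ bvec) ^ 2)) • Measure.dirac (lam j))
    (n : ℕ)
    (hatoms : ∃ t : Finset ℝ, n + 1 ≤ t.card ∧ ∀ x ∈ t, ν {x} ≠ 0)
    -- orthonormal polynomials `p` of `ν` with recurrence coefficients `a`, `b'`
    (p : ℕ → Polynomial ℝ) (a b' : ℕ → ℝ)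
    (hdeg : ∀ k ≤ n, (p k).natDegree = k)
    (hlead : ∀ k ≤ n, 0 < (p k).leadingCoeff)
    (horthp : ∀ k ≤ n, ∀ m ≤ n, k ≠ m → ∫ t, (p k).eval t * (p m).eval t ∂ν = 0)
    (hnorm : ∀ k ≤ n, ∫ t, (p k).eval t ^ 2 ∂ν = 1)
    (hbpos : ∀ k < n, 0 < b' k)
    (hrec : ∀ k < n, Polynomial.X * p k =
      Polynomial.C (a k) * p k + Polynomial.C (b' k) * p (k + 1) +
        (if k = 0 then 0 else Polynomial.C (b' (k - 1)) * p (k - 1)))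
    -- monic orthogonal polynomials of `ν`
    (mop : ℕ → Polynomial ℝ)
    (hrel : ∀ k ≤ n, p k = Polynomial.C ((p k).leadingCoeff) * mop k)
    (x xn : Fin N → ℝ)
    (hx : W.mulVec x = bvec)
    (hxnmem : xn ∈ Submodule.span ℝ {v : Fin N → ℝ | ∃ k < n, v = (W ^ k).mulVec bvec})
    (hxnmin : ∀ y ∈ Submodule.span ℝ {v : Fin N → ℝ | ∃ k < n, v = (W ^ k).mulVec bvec},
      (x - xn) ⬝ᵥ W.mulVec (x - xn) ≤ (x - y) ⬝ᵥ W.mulVec (x - y)) :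
    (bvec - W.mulVec xn) ⬝ᵥ (bvec - W.mulVec xn) =
      (∏ j ∈ Finset.range n, (b' j) ^ 2) / ((mop n).eval 0) ^ 2 :=
  stmt8_general N W hWsym bvec hb lam q heig horthq ν hν n hatoms p a b' hdeg horthp hnorm hrec mop
    hrel x xn hx hxnmem hxnmin
end

section
/- Spiked resolvent reduction formula: let Σ_0 be positive definite N×N, V_r an N×r matrix with orthonormal columns consisting of eigenvectors of Σ_0, D = diag(d_1,...,d_r) with d_i > 0, and Σ = Σ_0^{1/2}(I + V_r D V_r*)Σ_0^{1/2}-type spiked covariance with spectral perturbation Σ = Σ_0 + Σ_0^{1/2} V_r D V_r* Σ_0^{1/2}. Let X be N×M, G_1(z) = (Σ_0^{1/2} X X* Σ_0^{1/2} − z)^{-1} and G̃_1(z) = (Σ^{1/2} X X* Σ^{1/2} − z)^{-1}. Then G̃_1(z) = Σ^{-1/2}Σ_0^{1/2} [ G_1(z) − z G_1(z) V_r (D^{-1} + I + z V_r* G_1(z) V_r)^{-1} V_r* G_1(z) ] Σ_0^{1/2}Σ^{-1/2}, provided z is not an eigenvalue of either sample covariance matrix and D^{-1} + I + z V_r* G_1(z)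 V_r is invertible. -/
open Matrix
open scoped ComplexOrder

/-!
Write `S = Σ₀^{1/2}`, `T = Σ^{1/2}` and `P = 1 + V D Vᴴ`, so that `T² = S P S`. Conjugating by
`T S⁻¹` gives `T X Xᴴ T - z = (T S⁻¹) (S X Xᴴ S - z P⁻¹) (S⁻¹ T)`, because
`(T S⁻¹) P⁻¹ (S⁻¹ T) = T (T²)⁻¹ T = 1`. Since `Vᴴ V = 1`, the Woodbury identity gives
`P⁻¹ = 1 - V (D⁻¹ + 1)⁻¹ Vᴴ`, so the middle factor is the rank-`r` perturbation
`(S X Xᴴ S - z) + z V (D⁻¹ + 1)⁻¹ Vᴴ` of `G₁⁻¹`, and a second application of Woodbury inverts it.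
-/

namespace Matrix

variable {n m α : Type*} [Fintype n] [DecidableEq n] [Fintype m] [DecidableEq m] [CommRing α]

theorem add_smul_mul_inv_mul_inv_eq_sub {A : Matrix n n α} {E : Matrix m m α}
    (U : Matrix n m α) (V : Matrix m n α) (z : α)
    (hA : IsUnit A) (hE : IsUnit E) (hK : IsUnit (E + z • (V * A⁻¹ * U))) :
    (A + z • (U * E⁻¹ * V))⁻¹ = A⁻¹ - z • (A⁻¹ * U * (E + z • (V * A⁻¹ * U))⁻¹ * V * A⁻¹) := by
  have hE' : E⁻¹⁻¹ = E := nonsing_inv_nonsing_inv _ ((isUnit_iff_isUnit_det E).1 hE)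
  have h := add_mul_mul_inv_eq_sub A (z • U) E⁻¹ V hA (isUnit_nonsing_inv_iff.2 hE)
    (by rwa [hE', Matrix.mul_smul])
  simpa only [hE', Matrix.mul_smul, Matrix.smul_mul] using h

theorem one_add_mul_mul_inv_eq_sub {D : Matrix m m α} (U : Matrix n m α) (V : Matrix m n α)
    (hVU : V * U = 1) (hD : IsUnit D) (hD1 : IsUnit (D⁻¹ + 1)) :
    (1 + U * D * V)⁻¹ = 1 - U * (D⁻¹ + 1)⁻¹ * V := by
  have h := add_mul_mul_inv_eq_sub 1 U D V isUnit_one hD (by rwa [inv_one, Matrix.mul_one, hVU])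
  simpa only [inv_one, Matrix.one_mul, Matrix.mul_one, hVU] using h

theorem mul_mul_sub_smul_one_eq_of_mul_self {S T P : Matrix n n α} (W : Matrix n n α) (z : α)
    (hS : IsUnit S.det) (hT : IsUnit T.det) (hTT : T * T = S * P * S) :
    T * W * T - z • 1 = T * S⁻¹ * (S * W * S - z • P⁻¹) * S⁻¹ * T := by
  have hW : T * S⁻¹ * (S * W * S) * S⁻¹ * T = T * W * T := by
    simp only [Matrix.mul_assoc, nonsing_inv_mul_cancel_left _ _ hS,
      mul_nonsing_inv_cancel_left _ _ hS]
  have hP : T * S⁻¹ * P⁻¹ * S⁻¹ * T = 1 := by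
    have : S⁻¹ * P⁻¹ * S⁻¹ = T⁻¹ * T⁻¹ := by
      rw [← mul_inv_rev T T, hTT, mul_inv_rev, mul_inv_rev, Matrix.mul_assoc]
    rw [Matrix.mul_assoc T, Matrix.mul_assoc T, this]
    simp only [mul_nonsing_inv_cancel_left _ _ hT, nonsing_inv_mul _ hT]
  rw [Matrix.mul_sub, Matrix.sub_mul, Matrix.sub_mul, Matrix.mul_smul, Matrix.smul_mul,
    Matrix.smul_mul, hW, hP]

theorem inv_conj_nonsing_inv {S T N : Matrix n n α} (hS : IsUnit S.det) :
    (T * S⁻¹ * N * S⁻¹ * T)⁻¹ = T⁻¹ * S * N⁻¹ * S * T⁻¹ := by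
  simp only [mul_inv_rev, nonsing_inv_nonsing_inv _ hS, Matrix.mul_assoc]

theorem isUnit_inv_add_one {D : Matrix n n α} (hD : IsUnit D) (h1D : IsUnit (1 + D)) :
    IsUnit (D⁻¹ + 1) := by
  have h : D⁻¹ * (1 + D) = D⁻¹ + 1 := by
    rw [Matrix.mul_add, Matrix.mul_one, nonsing_inv_mul _ ((isUnit_iff_isUnit_det D).1 hD)]
  exact h ▸ (isUnit_nonsing_inv_iff.2 hD).mul h1D

end Matrix

theorem isUnit_diagonal_ofReal {ι : Type*} [Fintype ι] [DecidableEq ι] {d : ι → ℝ}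
    (hd : ∀ i, d i ≠ 0) : IsUnit (diagonal fun i => (d i : ℂ)) := by
  simpa [Pi.isUnit_iff] using hd

theorem isUnit_inv_diagonal_ofReal_add_one {ι : Type*} [Fintype ι] [DecidableEq ι] {d : ι → ℝ}
    (hd : ∀ i, 0 < d i) : IsUnit ((diagonal fun i => (d i : ℂ))⁻¹ + 1) := by
  refine isUnit_inv_add_one (isUnit_diagonal_ofReal fun i => (hd i).ne') ?_
  have h : (1 + diagonal fun i => (d i : ℂ)) = diagonal fun i => ((1 + d i : ℝ) : ℂ) := by
    rw [← diagonal_one, diagonal_add]; push_cast; rfl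
  rw [h]
  exact isUnit_diagonal_ofReal fun i => by have := hd i; positivity

theorem stmt13_general
    (N M r : ℕ)
    (Sig0 Shalf Sigm Thalf : Matrix (Fin N) (Fin N) ℂ)
    (X : Matrix (Fin N) (Fin M) ℂ)
    (Vr : Matrix (Fin N) (Fin r) ℂ)
    (d : Fin r → ℝ) (z : ℂ)
    (hSig0pd : Sig0.PosDef)
    (hShalfsq : Shalf * Shalf = Sig0)
    (hVorth : Vrᴴ * Vr = 1)
    (hd : ∀ i, 0 < d i)
    (hSigm : Sigm = Shalf * (1 + Vr * Matrix.diagonal (fun i => (d i : ℂ)) * Vrᴴ) * Shalf)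
    (hThalfsq : Thalf * Thalf = Sigm)
    (hThalfinv : Thalf.det ≠ 0)
    (hz1 : (Shalf * X * Xᴴ * Shalf - z • (1 : Matrix (Fin N) (Fin N) ℂ)).det ≠ 0)
    (hinv : ((Matrix.diagonal (fun i => (d i : ℂ)))⁻¹ + 1 +
        z • (Vrᴴ * (Shalf * X * Xᴴ * Shalf - z • (1 : Matrix (Fin N) (Fin N) ℂ))⁻¹ * Vr)).det ≠ 0) :
    (Thalf * X * Xᴴ * Thalf - z • (1 : Matrix (Fin N) (Fin N) ℂ))⁻¹ =
      Thalf⁻¹ * Shalf *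
        ((Shalf * X * Xᴴ * Shalf - z • (1 : Matrix (Fin N) (Fin N) ℂ))⁻¹ -
          z • ((Shalf * X * Xᴴ * Shalf - z • (1 : Matrix (Fin N) (Fin N) ℂ))⁻¹ * Vr *
            ((Matrix.diagonal (fun i => (d i : ℂ)))⁻¹ + 1 +
              z • (Vrᴴ * (Shalf * X * Xᴴ * Shalf - z • (1 : Matrix (Fin N) (Fin N) ℂ))⁻¹ * Vr))⁻¹ *
            Vrᴴ * (Shalf * X * Xᴴ * Shalf - z • (1 : Matrix (Fin N) (Fin N) ℂ))⁻¹)) *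
        Shalf * Thalf⁻¹ := by
  set D := diagonal fun i => (d i : ℂ)
  set A := Shalf * X * Xᴴ * Shalf - z • (1 : Matrix (Fin N) (Fin N) ℂ)
  have hS : IsUnit Shalf.det :=
    (isUnit_iff_isUnit_det _).1 (isUnit_of_mul_isUnit_left (hShalfsq ▸ hSig0pd.isUnit))
  have hD1 : IsUnit (D⁻¹ + 1) := isUnit_inv_diagonal_ofReal_add_one hd
  have hspike : (1 + Vr * D * Vrᴴ)⁻¹ = 1 - Vr * (D⁻¹ + 1)⁻¹ * Vrᴴ :=
    one_add_mul_mul_inv_eq_sub Vr Vrᴴ hVorth (isUnit_diagonal_ofReal fun i => (hd i).ne') hD1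
  have hsample : Shalf * (X * Xᴴ) * Shalf - z • (1 + Vr * D * Vrᴴ)⁻¹ =
      A + z • (Vr * (D⁻¹ + 1)⁻¹ * Vrᴴ) := by
    rw [hspike, smul_sub, ← Matrix.mul_assoc Shalf X, sub_sub_eq_add_sub, add_sub_right_comm]
  rw [Matrix.mul_assoc Thalf X, mul_mul_sub_smul_one_eq_of_mul_self (X * Xᴴ) z hS
      (isUnit_iff_ne_zero.2 hThalfinv) (hThalfsq.trans hSigm), inv_conj_nonsing_inv hS, hsample,
    add_smul_mul_inv_mul_inv_eq_sub Vr Vrᴴ z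
      ((isUnit_iff_isUnit_det _).2 (isUnit_iff_ne_zero.2 hz1)) hD1
      ((isUnit_iff_isUnit_det _).2 (isUnit_iff_ne_zero.2 hinv))]

/-- spiked resolvent reduction / rank-r Woodbury identity: with
`Σ = Sig0^{1/2}(I + V_r D V_rᴴ)Sig0^{1/2}` a spiked covariance built from the positive definite
`Sig0` (whose square root is `Shalf`, and `Thalf` is the square root of `Σ`), `V_r` an `N×r`
matrix of orthonormal eigenvectors of `Sig0`, `D = diag(d₁,…,d_r)` with `d_i > 0`,
`G₁(z) = (Sig0^{1/2} X Xᴴ Sig0^{1/2} − z)⁻¹` and `G̃₁(z) = (Σ^{1/2} X Xᴴ Σ^{1/2} − z)⁻¹`, one has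
`G̃₁(z) = Σ^{-1/2}Sig0^{1/2}[G₁ − z G₁ V_r (D⁻¹ + I + z V_rᴴ G₁ V_r)⁻¹ V_rᴴ G₁]Sig0^{1/2}Σ^{-1/2}`,
provided `z` is not an eigenvalue of either sample covariance matrix and
`D⁻¹ + I + z V_rᴴ G₁ V_r` is invertible. -/
theorem stmt13
    (N M r : ℕ)
    (Sig0 Shalf Sigm Thalf : Matrix (Fin N) (Fin N) ℂ)
    (X : Matrix (Fin N) (Fin M) ℂ)
    (Vr : Matrix (Fin N) (Fin r) ℂ)
    (σr : Fin r → ℂ) (d : Fin r → ℝ) (z : ℂ)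
    (hSig0pd : Sig0.PosDef)
    (hShalf : Shalf.IsHermitian) (hShalfsq : Shalf * Shalf = Sig0)
    (hVorth : Vrᴴ * Vr = 1)
    (hVeig : Sig0 * Vr = Vr * Matrix.diagonal σr)
    (hd : ∀ i, 0 < d i)
    (hSigm : Sigm = Shalf * (1 + Vr * Matrix.diagonal (fun i => (d i : ℂ)) * Vrᴴ) * Shalf)
    (hThalf : Thalf.IsHermitian) (hThalfsq : Thalf * Thalf = Sigm)
    (hThalfinv : Thalf.det ≠ 0)
    (hz1 : (Shalf * X * Xᴴ * Shalf - z • (1 : Matrix (Fin N) (Fin N) ℂ)).det ≠ 0)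
    (hz2 : (Thalf * X * Xᴴ * Thalf - z • (1 : Matrix (Fin N) (Fin N) ℂ)).det ≠ 0)
    (hinv : ((Matrix.diagonal (fun i => (d i : ℂ)))⁻¹ + 1 +
        z • (Vrᴴ * (Shalf * X * Xᴴ * Shalf - z • (1 : Matrix (Fin N) (Fin N) ℂ))⁻¹ * Vr)).det ≠ 0) :
    (Thalf * X * Xᴴ * Thalf - z • (1 : Matrix (Fin N) (Fin N) ℂ))⁻¹ =
      Thalf⁻¹ * Shalf *
        ((Shalf * X * Xᴴ * Shalf - z • (1 : Matrix (Fin N) (Fin N) ℂ))⁻¹ -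
          z • ((Shalf * X * Xᴴ * Shalf - z • (1 : Matrix (Fin N) (Fin N) ℂ))⁻¹ * Vr *
            ((Matrix.diagonal (fun i => (d i : ℂ)))⁻¹ + 1 +
              z • (Vrᴴ * (Shalf * X * Xᴴ * Shalf - z • (1 : Matrix (Fin N) (Fin N) ℂ))⁻¹ * Vr))⁻¹ *
            Vrᴴ * (Shalf * X * Xᴴ * Shalf - z • (1 : Matrix (Fin N) (Fin N) ℂ))⁻¹)) *
        Shalf * Thalf⁻¹ :=
  stmt13_general N M r Sig0 Shalf Sigm Thalf X Vr d z hSig0pd hShalfsq hVorth hd hSigm hThalfsq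
    hThalfinv hz1 hinv
end

section
/- For the function γ(z) = [∏_{j=1}^{g+1} (z−b_j)/(z−a_j)]^{1/4} defined and analytic on ℂ \ ∪_j [a_j,b_j], normalized so γ(z) → 1 as z → ∞ (with a_1 < b_1 < a_2 < ... < a_{g+1} < b_{g+1} real), the function γ + γ^{-1} does not vanish on ℂ \ ∪_j [a_j,b_j], while γ − γ^{-1} has exactly one root in each gap (b_j, a_{j+1}) for j = 1,...,g. -/
/-!
Both `γ + γ⁻¹ = 0` and `γ - γ⁻¹ = 0` force `γ⁴ = 1`, that is `∏ (z - bⱼ) = ∏ (z - aⱼ)`. The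
difference of the two products is a nonzero polynomial of degree at most `g` which changes sign
across each of the `g` gaps, so its roots are exactly one real point in each gap.
Since `γ⁴` commutes with complex conjugation, `γ(z̄) / conj γ(z)` is a continuous fourth root of
unity on the connected set `ℂ ∖ bands`; it tends to `1` at infinity, so it is `1` and `γ` is real
on the real axis off the bands. For real `γ ≠ 0`, `γ + γ⁻¹ ≠ 0`, while `γ - γ⁻¹ = 0` iff `γ⁴ = 1`.
-/

open Filter Topology ComplexConjugate Bornology

open Polynomial in
theorem card_lt_of_forall_prod_sub_eq_prod_sub {K ι : Type*} [CommRing K] [IsDomain K]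
    {t : Finset ι} {c d : ι → K} (hcd : ∃ x, ∏ i ∈ t, (x - c i) ≠ ∏ i ∈ t, (x - d i))
    {s : Finset K} (hs : ∀ x ∈ s, ∏ i ∈ t, (x - c i) = ∏ i ∈ t, (x - d i)) :
    s.card < t.card := by
  set p := ∏ i ∈ t, (X - C (c i))
  set q := ∏ i ∈ t, (X - C (d i))
  have hp : p.Monic := monic_prod_X_sub_C c t
  have hq : q.Monic := monic_prod_X_sub_C d t
  have hpdeg : p.degree = t.card := by
    rw [degree_eq_natDegree hp.ne_zero, natDegree_finsetProd_X_sub_C_eq_card]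
  have hqdeg : q.degree = t.card := by
    rw [degree_eq_natDegree hq.ne_zero, natDegree_finsetProd_X_sub_C_eq_card]
  obtain ⟨x, hx⟩ := hcd
  by_contra! hts
  have hpq : p = q := by
    refine eq_of_degree_sub_lt_of_eval_finset_eq s ?_ (by simpa [p, q, eval_prod] using hs)
    calc (p - q).degree < p.degree := degree_sub_lt_left (hpdeg.trans hqdeg.symm) hp.ne_zero
          (by rw [hp.leadingCoeff, hq.leadingCoeff])
      _ = t.card := hpdeg
      _ ≤ s.card := by exact_mod_cast hts
  exact hx (by simpa [p, q, eval_prod] using congrArg (eval x) hpq)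

theorem exists_mem_Ioo_eq_zero_of_mul_neg {α : Type*} [ConditionallyCompleteLinearOrder α]
    [TopologicalSpace α] [OrderTopology α] [DenselyOrdered α] {f : α → ℝ} {x y : α} (hxy : x ≤ y)
    (hf : ContinuousOn f (Set.Icc x y)) (h : f x * f y < 0) : ∃ c ∈ Set.Ioo x y, f c = 0 := by
  rcases mul_neg_iff.1 h with ⟨hx, hy⟩ | ⟨hx, hy⟩
  · exact intermediate_value_Ioo' hxy hf ⟨hy, hx⟩
  · exact intermediate_value_Ioo hxy hf ⟨hx, hy⟩

theorem pow_four_eq_one_of_add_inv_eq_zero {K : Type*} [Field K] {w : K} (hw : w ≠ 0)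
    (h : w + w⁻¹ = 0) : w ^ 4 = 1 := by
  have hw2 : w ^ 2 = -1 := by
    field_simp at h
    linear_combination h
  linear_combination (w ^ 2 - 1) * hw2

namespace Complex

theorem ofReal_add_inv_ne_zero {t : ℝ} (ht : t ≠ 0) : (t : ℂ) + (t : ℂ)⁻¹ ≠ 0 := by
  have : t + t⁻¹ ≠ 0 := by
    intro h
    field_simp at h
    nlinarith
  exact_mod_cast this

theorem ofReal_sub_inv_eq_zero_iff {t : ℝ} (ht : t ≠ 0) :
    (t : ℂ) - (t : ℂ)⁻¹ = 0 ↔ (t : ℂ) ^ 4 = 1 := by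
  have : t - t⁻¹ = 0 ↔ t ^ 4 = 1 := by
    rw [sub_eq_zero, show t ^ 4 = (t ^ 2) ^ 2 by ring,
      pow_eq_one_iff_of_nonneg (sq_nonneg t) two_ne_zero, sq, mul_eq_one_iff_eq_inv₀ ht]
  exact_mod_cast this

theorem isPreconnected_insert_ofReal_setOf_im_ne_zero (x : ℝ) :
    IsPreconnected (insert (x : ℂ) {z | z.im ≠ 0}) := by
  have hupper : IsPreconnected (insert (x : ℂ) {z | 0 < z.im}) :=
    (convex_halfSpace_im_gt 0).isPreconnected.subset_closure (Set.subset_insert _ _)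
      (Set.insert_subset_iff.2 ⟨by simp, subset_closure⟩)
  have hlower : IsPreconnected (insert (x : ℂ) {z | z.im < 0}) :=
    (convex_halfSpace_im_lt 0).isPreconnected.subset_closure (Set.subset_insert _ _)
      (Set.insert_subset_iff.2 ⟨by simp, subset_closure⟩)
  have hsplit : insert (x : ℂ) {z | z.im ≠ 0} =
      insert (x : ℂ) {z | 0 < z.im} ∪ insert (x : ℂ) {z | z.im < 0} := by
    ext z
    simp only [Set.mem_insert_iff, Set.mem_ofPred_eq, Set.mem_union, ne_iff_lt_or_gt]
    tauto
  rw [hsplit]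
  exact hupper.union _ (Set.mem_insert _ _) (Set.mem_insert _ _) hlower

theorem isPreconnected_compl_image_ofReal {S : Set ℝ} (hS : S ≠ Set.univ) :
    IsPreconnected (ofReal '' S)ᶜ := by
  obtain ⟨x₀, hx₀⟩ := (Set.ne_univ_iff_exists_notMem S).1 hS
  have hsub : ∀ x ∉ S, insert (x : ℂ) {z | z.im ≠ 0} ⊆ (ofReal '' S)ᶜ := by
    rintro x hx z (rfl | hz) ⟨y, hy, hyz⟩
    · exact hx (ofReal_injective hyz ▸ hy)
    · exact hz (hyz ▸ ofReal_im y)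
  refine isPreconnected_of_forall I fun y hy => ?_
  by_cases hy0 : y.im = 0
  · have hyre : y.re ∉ S := fun h => hy ⟨y.re, h, ext rfl hy0.symm⟩
    exact ⟨_, hsub _ hyre, Or.inr (by simp), Or.inl (ext rfl hy0),
      isPreconnected_insert_ofReal_setOf_im_ne_zero _⟩
  · exact ⟨_, hsub x₀ hx₀, Or.inr (by simp), Or.inr hy0,
      isPreconnected_insert_ofReal_setOf_im_ne_zero _⟩

theorem conj_mem_compl_image_ofReal {S : Set ℝ} {z : ℂ} (hz : z ∈ (ofReal '' S)ᶜ) :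
    conj z ∈ (ofReal '' S)ᶜ := by
  rintro ⟨x, hx, hxz⟩
  exact hz ⟨x, hx, by rw [← conj_conj z, ← hxz, conj_ofReal]⟩

theorem apply_conj_eq_conj_apply_of_pow {U : Set ℂ} {f : ℂ → ℂ} {n : ℕ} (hn : 0 < n)
    (hU : IsPreconnected U) (hUconj : ∀ z ∈ U, conj z ∈ U) (hUcob : U ∈ cobounded ℂ)
    (hf : ContinuousOn f U) (hf0 : ∀ z ∈ U, f z ≠ 0)
    (hpow : ∀ z ∈ U, f (conj z) ^ n = conj (f z ^ n))
    (hlim : Tendsto f (cobounded ℂ) (𝓝 1)) {z : ℂ} (hz : z ∈ U) :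
    f (conj z) = conj (f z) := by
  set h : ℂ → ℂ := fun w => f (conj w) / conj (f w) with h_def
  have hconj0 : ∀ w ∈ U, conj (f w) ≠ 0 := fun w hw => (map_ne_zero _).2 (hf0 w hw)
  have hcont : ContinuousOn h U :=
    (hf.comp continuous_conj.continuousOn hUconj).div
      (continuous_conj.comp_continuousOn hf) hconj0
  have hroots : Set.MapsTo h U (Polynomial.nthRootsFinset n (1 : ℂ)) := fun w hw => by
    rw [Finset.mem_coe, Polynomial.mem_nthRootsFinset hn, h_def, div_pow, hpow w hw, ← map_pow,
      div_self ((map_ne_zero _).2 (pow_ne_zero _ (hf0 w hw)))]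
  have hconst : ∀ w ∈ U, h w = h z := fun w hw =>
    hU.constant_of_mapsTo (Polynomial.nthRootsFinset n (1 : ℂ)).finite_toSet.isDiscrete hcont
      hroots hw hz
  have hlim' : Tendsto h (cobounded ℂ) (𝓝 1) := by
    have hconj : Tendsto conj (cobounded ℂ) (cobounded ℂ) :=
      tendsto_norm_atTop_iff_cobounded.1 (by simpa using tendsto_norm_cobounded_atTop)
    have := (hlim.comp hconj).div ((continuous_conj.tendsto 1).comp hlim) (by simp)
    rwa [map_one, div_one] at this
  have hz1 : h z = 1 := tendsto_nhds_unique
    (tendsto_const_nhds.congr' (eventually_of_mem hUcob fun w hw => (hconst w hw).symm)) hlim'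
  exact (div_eq_one_iff_eq (hconj0 z hz)).1 hz1

end Complex

section Gaps

variable {g : ℕ} {a b : ℕ → ℝ}

theorem strictMonoOn_a (hab : ∀ j ≤ g, a j < b j) (hgap : ∀ j < g, b j < a (j + 1)) :
    StrictMonoOn a (Set.Iic g) :=
  strictMonoOn_Iic_of_lt_succ fun m hm => by simpa using (hab m hm.le).trans (hgap m hm)

theorem strictMonoOn_b (hab : ∀ j ≤ g, a j < b j) (hgap : ∀ j < g, b j < a (j + 1)) :
    StrictMonoOn b (Set.Iic g) :=
  strictMonoOn_Iic_of_lt_succ fun m hm => by simpa using (hgap m hm).trans (hab (m + 1) hm)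

theorem b_lt_a_of_lt (hab : ∀ j ≤ g, a j < b j) (hgap : ∀ j < g, b j < a (j + 1))
    {i k : ℕ} (hik : i < k) (hk : k ≤ g) : b i < a k :=
  (hgap i (by omega)).trans_le
    ((strictMonoOn_a hab hgap).monotoneOn (show i + 1 ≤ g by omega) hk hik)

theorem lt_of_mem_gap_of_lt (hab : ∀ j ≤ g, a j < b j) (hgap : ∀ j < g, b j < a (j + 1))
    {i j : ℕ} {x : ℝ} (hx : x ∈ Set.Ioo (b j) (a (j + 1))) (hji : j < i) (hi : i ≤ g) :
    x < a i :=
  hx.2.trans_le ((strictMonoOn_a hab hgap).monotoneOn (show j + 1 ≤ g by omega) hi hji)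

theorem ofReal_notMem_image_biUnion_Icc_of_mem_gap (hab : ∀ j ≤ g, a j < b j)
    (hgap : ∀ j < g, b j < a (j + 1)) {j : ℕ} (hj : j < g) {x : ℝ}
    (hx : x ∈ Set.Ioo (b j) (a (j + 1))) :
    (x : ℂ) ∉ Complex.ofReal '' ⋃ i ∈ Finset.range (g + 1), Set.Icc (a i) (b i) := by
  simp only [Complex.ofReal_injective.mem_set_image, Set.mem_iUnion, Finset.mem_range,
    Nat.lt_succ_iff, not_exists]
  intro i hi hxi
  rcases le_or_gt i j with hij | hji
  · exact hxi.2.not_gt (((strictMonoOn_b hab hgap).monotoneOn hi hj.le hij).trans_lt hx.1)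
  · exact hxi.1.not_gt (lt_of_mem_gap_of_lt hab hgap hx hji hi)

theorem eq_of_mem_gap_of_mem_gap (hab : ∀ j ≤ g, a j < b j) (hgap : ∀ j < g, b j < a (j + 1))
    {j k : ℕ} (hj : j < g) (hk : k < g) {x : ℝ} (hxj : x ∈ Set.Ioo (b j) (a (j + 1)))
    (hxk : x ∈ Set.Ioo (b k) (a (k + 1))) : j = k := by
  have key : ∀ {j k : ℕ}, k < g → x ∈ Set.Ioo (b j) (a (j + 1)) →
      x ∈ Set.Ioo (b k) (a (k + 1)) → ¬ j < k := fun hk hxj hxk hjk =>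
    (lt_of_mem_gap_of_lt hab hgap hxj hjk hk.le).not_gt (lt_trans (hab _ hk.le) hxk.1)
  exact le_antisymm (not_lt.1 (key hj hxk hxj)) (not_lt.1 (key hk hxj hxk))

theorem prod_sub_mul_prod_sub_pos (hab : ∀ j ≤ g, a j < b j) (hgap : ∀ j < g, b j < a (j + 1))
    {j : ℕ} (hj : j < g) :
    0 < (∏ i ∈ Finset.range (g + 1), (b j - a i)) *
      ∏ i ∈ Finset.range (g + 1), (a (j + 1) - b i) := by
  rw [← Finset.prod_mul_distrib]
  refine Finset.prod_pos fun i hi => ?_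
  have hi : i ≤ g := Nat.lt_succ_iff.1 (Finset.mem_range.1 hi)
  have hmono := (strictMonoOn_a hab hgap).monotoneOn
  rcases le_or_gt i j with hij | hji
  · exact mul_pos (sub_pos.2 ((hmono hi hj.le hij).trans_lt (hab j hj.le)))
      (sub_pos.2 (b_lt_a_of_lt hab hgap (Nat.lt_succ_of_le hij) hj))
  · exact mul_pos_of_neg_of_neg (sub_neg.2 (b_lt_a_of_lt hab hgap hji hi))
      (sub_neg.2 ((hmono (show j + 1 ≤ g by omega) hi hji).trans_lt (hab i hi)))

theorem exists_mem_gap_prod_sub_eq_prod_sub (hab : ∀ j ≤ g, a j < b j)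
    (hgap : ∀ j < g, b j < a (j + 1)) {j : ℕ} (hj : j < g) :
    ∃ x ∈ Set.Ioo (b j) (a (j + 1)),
      ∏ i ∈ Finset.range (g + 1), (x - b i) = ∏ i ∈ Finset.range (g + 1), (x - a i) := by
  set f : ℝ → ℝ := fun x =>
    ∏ i ∈ Finset.range (g + 1), (x - b i) - ∏ i ∈ Finset.range (g + 1), (x - a i)
  have hzero : ∀ c : ℕ → ℝ, ∀ k ≤ g, ∏ i ∈ Finset.range (g + 1), (c k - c i) = 0 :=
    fun c k hk => Finset.prod_eq_zero (Finset.mem_range.2 (Nat.lt_succ_of_le hk)) (sub_self _)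
  have hfb : f (b j) = -∏ i ∈ Finset.range (g + 1), (b j - a i) := by
    simp [f, hzero b j hj.le]
  have hfa : f (a (j + 1)) = ∏ i ∈ Finset.range (g + 1), (a (j + 1) - b i) := by
    simp [f, hzero a (j + 1) hj]
  obtain ⟨x, hx, hfx⟩ := exists_mem_Ioo_eq_zero_of_mul_neg (f := f) (hgap j hj).le (by fun_prop)
    (by rw [hfb, hfa, neg_mul, neg_neg_iff_pos]; exact prod_sub_mul_prod_sub_pos hab hgap hj)
  exact ⟨x, hx, sub_eq_zero.1 hfx⟩

theorem exists_gap_roots (hab : ∀ j ≤ g, a j < b j) (hgap : ∀ j < g, b j < a (j + 1)) :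
    ∃ r : Fin g → ℝ, (∀ j : Fin g, r j ∈ Set.Ioo (b j) (a (j + 1))) ∧ ∀ z : ℂ,
      (∏ i ∈ Finset.range (g + 1), (z - b i) = ∏ i ∈ Finset.range (g + 1), (z - a i) ↔
        ∃ j : Fin g, z = r j) := by
  choose r hr hroot using fun j : Fin g => exists_mem_gap_prod_sub_eq_prod_sub hab hgap j.isLt
  have hr_inj : Function.Injective fun j => (r j : ℂ) := fun j k hjk =>
    Fin.ext (eq_of_mem_gap_of_mem_gap hab hgap j.isLt k.isLt (hr j)
      (Complex.ofReal_injective hjk ▸ hr k))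
  have hroot' : ∀ j, ∏ i ∈ Finset.range (g + 1), ((r j : ℂ) - b i) =
      ∏ i ∈ Finset.range (g + 1), ((r j : ℂ) - a i) := fun j => by exact_mod_cast hroot j
  have hb0 : ∏ i ∈ Finset.range (g + 1), ((b 0 : ℂ) - b i) ≠
      ∏ i ∈ Finset.range (g + 1), ((b 0 : ℂ) - a i) := by
    rw [Finset.prod_eq_zero (Finset.mem_range.2 (Nat.succ_pos g)) (sub_self _), ne_comm,
      Finset.prod_ne_zero_iff]
    intro i hi
    rw [sub_ne_zero, Ne, Complex.ofReal_inj]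
    rcases Nat.eq_zero_or_pos i with rfl | hi0
    · exact (hab 0 (Nat.zero_le g)).ne'
    · exact (b_lt_a_of_lt hab hgap hi0 (Nat.lt_succ_iff.1 (Finset.mem_range.1 hi))).ne
  refine ⟨r, hr, fun z => ⟨fun hz => ?_, ?_⟩⟩
  · -- otherwise `z` and the `g` gap roots are `g + 1` common values of the two products
    by_contra! hzr
    have hcard := card_lt_of_forall_prod_sub_eq_prod_sub ⟨_, hb0⟩
      (s := insert z (Finset.univ.image fun j => (r j : ℂ))) (by
        simp only [Finset.mem_insert, Finset.mem_image, Finset.mem_univ, true_and]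
        rintro x (rfl | ⟨j, rfl⟩)
        exacts [hz, hroot' j])
    rw [Finset.card_insert_of_notMem (by simpa [eq_comm] using hzr),
      Finset.card_image_of_injective _ hr_inj, Finset.card_univ, Fintype.card_fin,
      Finset.card_range] at hcard
    exact lt_irrefl _ hcard
  · rintro ⟨j, rfl⟩
    exact hroot' j

theorem left_mem_biUnion_Icc (hab : ∀ j ≤ g, a j < b j) {i : ℕ} (hi : i ≤ g) :
    a i ∈ ⋃ j ∈ Finset.range (g + 1), Set.Icc (a j) (b j) :=
  Set.mem_iUnion₂.2
    ⟨i, Finset.mem_range.2 (Nat.lt_succ_of_le hi), Set.left_mem_Icc.2 (hab i hi).le⟩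

theorem right_mem_biUnion_Icc (hab : ∀ j ≤ g, a j < b j) {i : ℕ} (hi : i ≤ g) :
    b i ∈ ⋃ j ∈ Finset.range (g + 1), Set.Icc (a j) (b j) :=
  Set.mem_iUnion₂.2
    ⟨i, Finset.mem_range.2 (Nat.lt_succ_of_le hi), Set.right_mem_Icc.2 (hab i hi).le⟩

theorem prod_sub_ne_zero_of_notMem {S : Set ℝ} {c : ℕ → ℝ} (hc : ∀ i ≤ g, c i ∈ S) {z : ℂ}
    (hz : z ∉ Complex.ofReal '' S) : ∏ i ∈ Finset.range (g + 1), (z - c i) ≠ 0 :=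
  Finset.prod_ne_zero_iff.2 fun i hi => sub_ne_zero.2 fun h =>
    hz ⟨c i, hc i (Nat.lt_succ_iff.1 (Finset.mem_range.1 hi)), h.symm⟩

theorem prod_div_ne_zero_of_notMem (hab : ∀ j ≤ g, a j < b j) {z : ℂ}
    (hz : z ∉ Complex.ofReal '' ⋃ i ∈ Finset.range (g + 1), Set.Icc (a i) (b i)) :
    ∏ i ∈ Finset.range (g + 1), (z - b i) / (z - a i) ≠ 0 := by
  rw [Finset.prod_div_distrib]
  exact div_ne_zero (prod_sub_ne_zero_of_notMem (fun i => right_mem_biUnion_Icc hab) hz)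
    (prod_sub_ne_zero_of_notMem (fun i => left_mem_biUnion_Icc hab) hz)

theorem exists_ofReal_eq_of_prod_div_eq_one (hab : ∀ j ≤ g, a j < b j)
    (hgap : ∀ j < g, b j < a (j + 1)) {z : ℂ}
    (hz : ∏ i ∈ Finset.range (g + 1), (z - b i) / (z - a i) = 1) : ∃ x : ℝ, z = x := by
  obtain ⟨r, -, hr⟩ := exists_gap_roots hab hgap
  rw [Finset.prod_div_distrib] at hz
  have hne : ∏ i ∈ Finset.range (g + 1), (z - a i) ≠ 0 := fun h => by simp [h] at hz
  obtain ⟨j, rfl⟩ := (hr z).1 ((div_eq_one_iff_eq hne).1 hz)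
  exact ⟨r j, rfl⟩

theorem existsUnique_mem_gap_prod_div_eq_one (hab : ∀ j ≤ g, a j < b j)
    (hgap : ∀ j < g, b j < a (j + 1)) {j : ℕ} (hj : j < g) :
    ∃! x : ℝ, x ∈ Set.Ioo (b j) (a (j + 1)) ∧
      ∏ i ∈ Finset.range (g + 1), ((x : ℂ) - b i) / ((x : ℂ) - a i) = 1 := by
  obtain ⟨r, hr_gap, hr⟩ := exists_gap_roots hab hgap
  have hiff : ∀ x ∈ Set.Ioo (b j) (a (j + 1)),
      ∏ i ∈ Finset.range (g + 1), ((x : ℂ) - b i) / ((x : ℂ) - a i) = 1 ↔ ∃ k, (x : ℂ) = r k := by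
    intro x hx
    have hxS := ofReal_notMem_image_biUnion_Icc_of_mem_gap hab hgap hj hx
    rw [Finset.prod_div_distrib,
      div_eq_one_iff_eq (prod_sub_ne_zero_of_notMem (fun i => left_mem_biUnion_Icc hab) hxS), hr]
  refine ⟨r ⟨j, hj⟩, ⟨hr_gap ⟨j, hj⟩, (hiff _ (hr_gap ⟨j, hj⟩)).2 ⟨_, rfl⟩⟩, fun y ⟨hy, hyR⟩ => ?_⟩
  obtain ⟨k, hk⟩ := (hiff y hy).1 hyR
  rw [Complex.ofReal_inj.1 hk]
  exact congrArg r (Fin.ext (eq_of_mem_gap_of_mem_gap hab hgap k.isLt hj (hr_gap k)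
    (Complex.ofReal_inj.1 hk ▸ hy)))

end Gaps

/-- for `γ(z) = [∏_{j=0}^{g} (z−b_j)/(z−a_j)]^{1/4}` analytic on
`ℂ \ ∪_j [a_j,b_j]` and normalized so that `γ(z) → 1` as `z → ∞`
(with `a_0 < b_0 < a_1 < ⋯ < a_g < b_g` real), the function `γ + γ⁻¹` does not vanish on
`ℂ \ ∪_j [a_j,b_j]`, while `γ − γ⁻¹` has exactly one root in each gap `(b_j, a_{j+1})`,
`j = 0,…,g−1`. -/
theorem stmt17
    (g : ℕ) (a b : ℕ → ℝ)
    (hab : ∀ j ≤ g, a j < b j)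
    (hgap : ∀ j < g, b j < a (j + 1))
    (bands : Set ℂ)
    (hbands : bands = ⋃ j ∈ Finset.range (g + 1), (Complex.ofReal '' Set.Icc (a j) (b j)))
    (γ : ℂ → ℂ)
    (hγdiff : DifferentiableOn ℂ γ bandsᶜ)
    (hγpow : ∀ z ∈ bandsᶜ, (γ z) ^ 4 = ∏ j ∈ Finset.range (g + 1),
      ((z - (b j : ℂ)) / (z - (a j : ℂ))))
    (hγlim : Tendsto γ (Bornology.cobounded ℂ) (𝓝 1)) :
    (∀ z ∈ bandsᶜ, γ z + (γ z)⁻¹ ≠ 0) ∧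
      ∀ j < g, ∃! x : ℝ, x ∈ Set.Ioo (b j) (a (j + 1)) ∧
        γ (x : ℂ) - (γ (x : ℂ))⁻¹ = 0 := by
  set S := ⋃ j ∈ Finset.range (g + 1), Set.Icc (a j) (b j)
  have hS : IsCompact S := (Finset.range (g + 1)).isCompact_biUnion fun j _ => isCompact_Icc
  obtain rfl : bands = Complex.ofReal '' S := by rw [hbands, Set.image_iUnion₂]
  have hγ0 : ∀ z ∈ (Complex.ofReal '' S)ᶜ, γ z ≠ 0 := fun z hz h0 =>
    prod_div_ne_zero_of_notMem hab hz (by rw [← hγpow z hz, h0, zero_pow four_ne_zero])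
  have hγreal : ∀ x : ℝ, (x : ℂ) ∈ (Complex.ofReal '' S)ᶜ → ∃ t : ℝ, t ≠ 0 ∧ γ x = t := by
    intro x hx
    have hconj := Complex.apply_conj_eq_conj_apply_of_pow four_pos
      (Complex.isPreconnected_compl_image_ofReal hS.ne_univ)
      (fun z => Complex.conj_mem_compl_image_ofReal)
      (isBounded_def.1 (hS.image Complex.continuous_ofReal).isBounded) hγdiff.continuousOn hγ0
      (fun z hz => by rw [hγpow _ (Complex.conj_mem_compl_image_ofReal hz), hγpow z hz]; simp)
      hγlim hx
    obtain ⟨t, ht⟩ := Complex.conj_eq_iff_real.1 (by simpa using hconj.symm)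
    exact ⟨t, fun h => hγ0 _ hx (by rw [ht, h, Complex.ofReal_zero]), ht⟩
  refine ⟨fun z hz hsum => ?_, fun j hj => ?_⟩
  · obtain ⟨x, rfl⟩ := exists_ofReal_eq_of_prod_div_eq_one hab hgap
      (hγpow z hz ▸ pow_four_eq_one_of_add_inv_eq_zero (hγ0 z hz) hsum)
    obtain ⟨t, ht0, ht⟩ := hγreal x hz
    exact Complex.ofReal_add_inv_ne_zero ht0 (ht ▸ hsum)
  · refine (existsUnique_congr fun x => and_congr_right fun hx => ?_).2
      (existsUnique_mem_gap_prod_div_eq_one hab hgap hj)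
    have hxS := ofReal_notMem_image_biUnion_Icc_of_mem_gap hab hgap hj hx
    obtain ⟨t, ht0, ht⟩ := hγreal x hxS
    rw [← hγpow _ hxS, ht]
    exact Complex.ofReal_sub_inv_eq_zero_iff ht0
end
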